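/- Let Φ^E : [0,1] → ℝ⁵ be a C¹ reparametrization of a stationary solution with Φ^E(0) = Q^E(r_i), Φ^E(1) = Q^E(r_{i+1}) (every point Φ^E(s) is a state of the equilibrium with zero radial momentum, e.g. Φ^E(s) = Q^E(r_i + s(r_{i+1}−r_i))), and let the path of the scheme be Φ(s) = Φ^E(s) + q_i^f + s(q_{i+1}^f − q_i^f). Define the Osher–Romberg viscosity V_{i+1/2}(q_{i+1}−q_i) = (4/3) S₁ R₁ + (4/3) S₂ R₂ − (1/3) S₃ R₃, where R₁ = f(Φ(1/2)) − f(Φ(0)) + B(Φ(1/2)−Φ(0)), R₂ = f(Φ(1)) − f(Φ(1/2)) + B(Φ(1)−Φ(1/2)), R₃ = f(Φ(1)) − f(Φ(0)) + B(Φ(1)−Φ(0)), the nonconservative jump terms B being computed by the same formulas as B_{i+1/2} from the corresponding pair of path states with fluctuations taken relative to Φ^E at the corresponding parameters, and where S₁, S₂, S₃ are arbitrary 5×5 real matrices (the sign matrices sign(A(Φ(1/4))), sign(A(Φ(3/4))), sign(A(Φ(1/2))) in the scheme). If q_i = Q^E(r_i) and q_{i+1} = Q^E(r_{i+1}) (so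 q_i^f = q_{i+1}^f = 0 and Φ = Φ^E), then R₁ = R₂ = R₃ = 0, hence V_{i+1/2}(q_{i+1}−q_i) = 0 and both fluctuations D^±_{i+1/2} = ½( f(q_{i+1}) − f(q_i) + B_{i+1/2}(q_{i+1}−q_i) ± V_{i+1/2}(q_{i+1}−q_i) ) vanish. Consequently the first-order Osher–Romberg path-conservative scheme is exactly well balanced. -/
import Mathlib


/-! One-dimensional discretization of the cylindrical Euler system with
gravity, written with nonconservative products.  States are described by the
primitive variables `(r, ρ, u, v, E)`; the conserved vector is
`q = (rρ, rρu, rρv, rρE, r)`. -/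

/-- Primitive state `(r, ρ, u, v, E)`. -/
structure Prim where
  r : ℝ
  ρ : ℝ
  u : ℝ
  v : ℝ
  E : ℝ

/-- Pressure `P = (γ-1)ρ(E - (u²+v²)/2)`. -/
noncomputable def pres (γ : ℝ) (a : Prim) : ℝ :=
  (γ - 1) * a.ρ * (a.E - (a.u ^ 2 + a.v ^ 2) / 2)

/-- Flux `f(q) = (rρu, rρu², rρuv, ru(ρE+P), 0)`. -/
noncomputable def fvec (γ : ℝ) (a : Prim) : Fin 5 → ℝ :=
  ![a.r * a.ρ * a.u, a.r * a.ρ * a.u ^ 2, a.r * a.ρ * a.u * a.v,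
    a.r * a.u * (a.ρ * a.E + pres γ a), 0]

/-- The state of the prescribed stationary solution at radius `r`
(zero radial velocity). -/
def eqPrim (ρE vE EE : ℝ → ℝ) (r : ℝ) : Prim :=
  ⟨r, ρE r, 0, vE r, EE r⟩

/-- Pressure fluctuation `P^f = P - P^E(r)` relative to the stationary
solution. -/
noncomputable def Pf (γ : ℝ) (ρE vE EE : ℝ → ℝ) (a : Prim) : ℝ :=
  pres γ a - pres γ (eqPrim ρE vE EE a.r)

/-- Fluctuation `(rρ)^f = rρ - rρ^E(r)`. -/
def rρf (ρE : ℝ → ℝ) (a : Prim) : ℝ := a.r * a.ρ - a.r * ρE a.r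

/-- `ζ_r = G mₛ/r² - v²/r`. -/
noncomputable def ζr (G ms : ℝ) (a : Prim) : ℝ :=
  G * ms / a.r ^ 2 - a.v ^ 2 / a.r

/-- Fluctuation `ζ_r^f = ((v^E)² - v²)/r`. -/
noncomputable def ζrf (vE : ℝ → ℝ) (a : Prim) : ℝ :=
  ((vE a.r) ^ 2 - a.v ^ 2) / a.r

/-- Nonconservative jump term `B(q_b - q_a) = (0, b₂, b₃, b₄, 0)` between two
states, with arithmetic-mean interface values for the fluctuation quantities
and given (arbitrary) interface values `rρEh = (rρ)^E_{1/2}` and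
`ζrh = (ζ_r)_{1/2}`. -/
noncomputable def Bjump (γ G ms : ℝ) (ρE vE EE : ℝ → ℝ) (rρEh ζrh : ℝ)
    (a b : Prim) : Fin 5 → ℝ :=
  ![0,
    ((a.r + b.r) / 2) * (Pf γ ρE vE EE b - Pf γ ρE vE EE a)
      + (rρEh * ((ζrf vE a + ζrf vE b) / 2)
          + ((rρf ρE a + rρf ρE b) / 2) * ζrh) * (b.r - a.r),
    (((a.r * a.ρ * a.u + b.r * b.ρ * b.u) / 2) / ((a.r + b.r) / 2))
      * ((a.v + b.v) / 2) * (b.r - a.r),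
    ((a.r * a.ρ * a.u + b.r * b.ρ * b.u) / 2)
      * (G * ms / ((a.r + b.r) / 2) ^ 2) * (b.r - a.r),
    0]



lemma fvec_eq_zero (γ : ℝ) (ρE vE EE : ℝ → ℝ) (r : ℝ) :
    fvec γ (eqPrim ρE vE EE r) = 0 := by
  funext i; fin_cases i <;> simp [fvec, eqPrim]

lemma Bjump_eq_zero (γ G ms : ℝ) (ρE vE EE : ℝ → ℝ) (h1 h2 ra rb : ℝ) :
    Bjump γ G ms ρE vE EE h1 h2 (eqPrim ρE vE EE ra) (eqPrim ρE vE EE rb) = 0 := by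
  funext i; fin_cases i <;>
    simp [Bjump, Pf, ζrf, rρf, eqPrim]

/-- well balancing of the first-order Osher–Romberg
path-conservative scheme.  If `q_i = Q^E(r_i)` and `q_{i+1} = Q^E(r_{i+1})`
lie on the same stationary solution, then the path `Φ` coincides with the
equilibrium reparametrization `Φ^E(s) = Q^E(σ(s))`, the three residuals
`R₁, R₂, R₃` of the Romberg quadrature vanish, hence the Osher–Romberg
viscosity `V = (4/3)S₁R₁ + (4/3)S₂R₂ - (1/3)S₃R₃` vanishes for ANY sign
matrices `S₁, S₂, S₃`, and both fluctuations `D^±` vanish. -/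
theorem osher_romberg_well_balanced
    (γ G ms : ℝ) (hγ : 1 < γ)
    (ρE vE EE : ℝ → ℝ) (hρE : ∀ x : ℝ, 0 < ρE x)
    (ri rip : ℝ) (hri : 0 < ri) (hrip : 0 < rip) (hlt : ri < rip)
    -- C¹ reparametrization of the stationary solution connecting r_i, r_{i+1}
    (σ : ℝ → ℝ) (hσC : ContDiffOn ℝ 1 σ (Set.Icc 0 1))
    (hσ0 : σ 0 = ri) (hσ1 : σ 1 = rip)
    (hσpos : ∀ s ∈ Set.Icc (0 : ℝ) 1, 0 < σ s)
    (qi qip : Prim)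
    (hqi : qi = eqPrim ρE vE EE ri) (hqip : qip = eqPrim ρE vE EE rip)
    -- arbitrary sign matrices sign(A(Φ(1/4))), sign(A(Φ(3/4))), sign(A(Φ(1/2)))
    (S₁ S₂ S₃ : Matrix (Fin 5) (Fin 5) ℝ)
    -- arbitrary interface values for the four B-terms
    (c₁ c₂ c₃ cB : ℝ × ℝ) :
    -- the path (fluctuations vanish, so Φ = Φ^E)
    let Φ : ℝ → Prim := fun s => eqPrim ρE vE EE (σ s)
    let R₁ := fvec γ (Φ (1 / 2)) - fvec γ (Φ 0)
      + Bjump γ G ms ρE vE EE c₁.1 c₁.2 (Φ 0) (Φ (1 / 2))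
    let R₂ := fvec γ (Φ 1) - fvec γ (Φ (1 / 2))
      + Bjump γ G ms ρE vE EE c₂.1 c₂.2 (Φ (1 / 2)) (Φ 1)
    let R₃ := fvec γ (Φ 1) - fvec γ (Φ 0)
      + Bjump γ G ms ρE vE EE c₃.1 c₃.2 (Φ 0) (Φ 1)
    let V := (4 / 3 : ℝ) • S₁.mulVec R₁ + (4 / 3 : ℝ) • S₂.mulVec R₂
      - (1 / 3 : ℝ) • S₃.mulVec R₃
    let Bi := Bjump γ G ms ρE vE EE cB.1 cB.2 qi qip
    Φ 0 = qi ∧ Φ 1 = qip ∧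
    R₁ = 0 ∧ R₂ = 0 ∧ R₃ = 0 ∧ V = 0 ∧
    (1 / 2 : ℝ) • (fvec γ qip - fvec γ qi + Bi + V) = 0 ∧
    (1 / 2 : ℝ) • (fvec γ qip - fvec γ qi + Bi - V) = 0 := by
  intro Φ R₁ R₂ R₃ V Bi
  have hΦ0 : Φ 0 = qi := by simp [Φ, hσ0, hqi]
  have hΦ1 : Φ 1 = qip := by simp [Φ, hσ1, hqip]
  have hR1 : R₁ = 0 := by
    simp [R₁, Φ, fvec_eq_zero, Bjump_eq_zero]
  have hR2 : R₂ = 0 := by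
    simp [R₂, Φ, fvec_eq_zero, Bjump_eq_zero]
  have hR3 : R₃ = 0 := by
    simp [R₃, Φ, fvec_eq_zero, Bjump_eq_zero]
  have hV : V = 0 := by
    simp [V, hR1, hR2, hR3, Matrix.mulVec_zero]
  have hBi : Bi = 0 := by
    simp [Bi, hqi, hqip, Bjump_eq_zero]
  refine ⟨hΦ0, hΦ1, hR1, hR2, hR3, hV, ?_, ?_⟩ <;>
    simp [hV, hBi, hqi, hqip, fvec_eq_zero]
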